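/- arXiv:1904.01383 — 2 statements merged into one kernel-verified Lean document; each statement's English description precedes it below -/
import Mathlib

section
/- For all real n > 0 and a with 1 ≤ a ≤ n/e, the variance-type sum 2·Σ_{i=1}^{∞} n^2/(a·e^{i/a} + n)^4 is bounded above by C·(a/n^2)·log(n/a) for a universal constant C > 0. -/
/-! Every term is at most `1/n²`. Put `L = log (n/a) ≥ 1` and `N = ⌈a L⌉₊`, so that
`a e^{N/a} ≥ n`: the first `N ≤ 2 a L` terms contribute at most `2 a L / n²`, and beyond `N`
the terms are dominated by `n⁻² e^{-j/a}`, a geometric series of sum at most `(1 + a) / n²`. -/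

open Real Finset

theorem tsum_le_of_le_of_le_geometric {f : ℕ → ℝ} {B r : ℝ} (N : ℕ) (hf : ∀ i, 0 ≤ f i)
    (hB : ∀ i, f i ≤ B) (hr0 : 0 ≤ r) (hr1 : r < 1) (htail : ∀ j, f (j + N) ≤ B * r ^ j) :
    ∑' i, f i ≤ B * (N + (1 - r)⁻¹) := by
  have hgeom : Summable fun j => B * r ^ j := (summable_geometric_of_lt_one hr0 hr1).mul_left B
  have hsum_tail : Summable fun j => f (j + N) := hgeom.of_nonneg_of_le (fun j => hf _) htail
  rw [← ((summable_nat_add_iff N).mp hsum_tail).sum_add_tsum_nat_add N]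
  calc ∑ i ∈ range N, f i + ∑' j, f (j + N) ≤ ∑ _i ∈ range N, B + ∑' j, B * r ^ j :=
        add_le_add (sum_le_sum fun i _ => hB i) (hsum_tail.tsum_le_tsum htail hgeom)
    _ = B * (N + (1 - r)⁻¹) := by
        rw [sum_const, card_range, nsmul_eq_mul, tsum_mul_left, tsum_geometric_of_lt_one hr0 hr1]
        ring

theorem inv_one_sub_exp_neg_le {x : ℝ} (hx : 0 < x) : (1 - exp (-x))⁻¹ ≤ 1 + x⁻¹ := by
  have hexp : exp (-x) ≤ (1 + x)⁻¹ := by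
    rw [exp_neg]
    exact inv_anti₀ (by positivity) (by linarith [add_one_le_exp x])
  have hgap : x / (1 + x) ≤ 1 - exp (-x) := by
    have : x / (1 + x) = 1 - (1 + x)⁻¹ := by field_simp; ring
    linarith
  calc (1 - exp (-x))⁻¹ ≤ (x / (1 + x))⁻¹ := inv_anti₀ (by positivity) hgap
    _ = 1 + x⁻¹ := by field_simp; ring

theorem sq_div_pow_four_le {n t D : ℝ} (hn : 0 < n) (ht : 0 < t) (hD : n * t ≤ D) :
    n ^ 2 / D ^ 4 ≤ 1 / n ^ 2 / t ^ 4 := by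
  calc n ^ 2 / D ^ 4 ≤ n ^ 2 / (n * t) ^ 4 := by gcongr
    _ = 1 / n ^ 2 / t ^ 4 := by field_simp

theorem inv_exp_pow_four_le {a : ℝ} (ha : 0 < a) (j : ℕ) :
    (exp ((j + 1) / a) ^ 4)⁻¹ ≤ exp (-a⁻¹) ^ j := by
  rw [← exp_nat_mul, ← exp_nat_mul, ← exp_neg, exp_le_exp, mul_neg, neg_le_neg_iff]
  push_cast
  rw [← div_eq_mul_inv, mul_div_assoc']
  gcongr
  linarith

theorem tsum_sq_div_exp_add_pow_four_le {n a : ℝ} (hn : 0 < n) (ha : 0 < a) (N : ℕ)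
    (hN : n ≤ a * exp (N / a)) :
    ∑' i : ℕ, n ^ 2 / (a * exp (((i : ℝ) + 1) / a) + n) ^ 4 ≤ 1 / n ^ 2 * (N + (1 + a)) := by
  set f : ℕ → ℝ := fun i => n ^ 2 / (a * exp (((i : ℝ) + 1) / a) + n) ^ 4
  have hhead (i : ℕ) : f i ≤ 1 / n ^ 2 := by
    simpa using sq_div_pow_four_le hn one_pos
      (by linarith [mul_pos ha (exp_pos ((i + 1) / a))] : n * 1 ≤ _)
  have htail (j : ℕ) : f (j + N) ≤ 1 / n ^ 2 * exp (-a⁻¹) ^ j := by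
    have hD : n * exp ((j + 1) / a) ≤ a * exp ((((j + N : ℕ) : ℝ) + 1) / a) + n := by
      have : (((j + N : ℕ) : ℝ) + 1) / a = N / a + (j + 1) / a := by push_cast; ring
      rw [this, exp_add, ← mul_assoc]
      nlinarith [exp_pos ((j + 1) / a)]
    calc f (j + N) ≤ 1 / n ^ 2 / exp ((j + 1) / a) ^ 4 := sq_div_pow_four_le hn (exp_pos _) hD
      _ ≤ 1 / n ^ 2 * exp (-a⁻¹) ^ j := by
        rw [div_eq_mul_inv (1 / n ^ 2)]
        gcongr
        exact inv_exp_pow_four_le ha j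
  have hratio : (1 - exp (-a⁻¹))⁻¹ ≤ 1 + a := by
    simpa using inv_one_sub_exp_neg_le (inv_pos.mpr ha)
  calc ∑' i, f i ≤ 1 / n ^ 2 * (N + (1 - exp (-a⁻¹))⁻¹) :=
        tsum_le_of_le_of_le_geometric N (fun i => by positivity) hhead (exp_pos _).le
          (exp_lt_one_iff.mpr (neg_lt_zero.mpr (inv_pos.mpr ha))) htail
    _ ≤ 1 / n ^ 2 * (N + (1 + a)) := by gcongr

/-- For `1 ≤ a ≤ n/e`, `2·Σ_{i≥1} n²/(a e^{i/a}+n)⁴ ≤ C·(a/n²)·log(n/a)` for a universal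
constant `C > 0`. -/
theorem stmt7 :
    ∃ C : ℝ, 0 < C ∧ ∀ n a : ℝ, 1 ≤ a → a ≤ n / Real.exp 1 →
      2 * ∑' i : ℕ, n ^ 2 / (a * Real.exp (((i : ℝ) + 1) / a) + n) ^ 4 ≤
        C * (a / n ^ 2) * Real.log (n / a) := by
  refine ⟨8, by norm_num, fun n a ha hae => ?_⟩
  have ha0 : 0 < a := one_pos.trans_le ha
  have hna : exp 1 ≤ n / a := by
    rw [le_div_iff₀ ha0, mul_comm]
    rwa [le_div_iff₀ (exp_pos 1)] at hae
  have hn0 : 0 < n := by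
    have := (exp_pos 1).trans_le hna
    rwa [div_pos_iff_of_pos_right ha0] at this
  set L := log (n / a)
  have hL : 1 ≤ L := (le_log_iff_exp_le (by positivity)).mpr hna
  set N := ⌈a * L⌉₊
  have hN : (N : ℝ) < a * L + 1 := Nat.ceil_lt_add_one (by positivity)
  have hgrowth : n ≤ a * exp (N / a) := by
    have hLN : L ≤ N / a := (le_div_iff₀ ha0).mpr (by linarith [Nat.le_ceil (a * L)])
    rw [← div_le_iff₀' ha0, ← exp_log (div_pos hn0 ha0)]
    exact exp_le_exp.mpr hLN
  calc 2 * ∑' i : ℕ, n ^ 2 / (a * exp (((i : ℝ) + 1) / a) + n) ^ 4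
      ≤ 2 * (1 / n ^ 2 * (N + (1 + a))) := by
        gcongr; exact tsum_sq_div_exp_add_pow_four_le hn0 ha0 N hgrowth
    _ ≤ 2 * (1 / n ^ 2 * (4 * a * L)) := by gcongr; nlinarith
    _ = 8 * (a / n ^ 2) * L := by ring
end

section
/- Let Z_1, Z_2, ... be i.i.d. standard normal random variables, n > 0, a ≥ 1, and U_n(a) = Σ_{i≥1} Z_i^2/(a·e^{i/a} + n). Then E[U_n(a)] ≥ (a/(2n))·log(n/a) whenever 1 ≤ a ≤ n/e. -/
/-!
Since `E[Z_i²] = 1`, the expectation is `Σ_{i ≥ 1} g(i)` with `g(t) = 1/(a e^{t/a} + n)`.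
With `x = a log(n/a)`, the numbers `p = a e^{s/a}` and `q = a e^{t/a}` satisfy `pq ≤ n²` as soon
as `s + t ≤ 2x`, and then `1/(p + n) + 1/(q + n) ≥ 1/n`. Pairing `i` with `⌊2x⌋ - i` thus gives
`⌊2x⌋ - 1 ≥ x` indices carrying weight at least `1/(2n)` on average; when `x < 3/2` the first
two terms are bounded directly, using `e ≤ 3`.
-/

open MeasureTheory ProbabilityTheory Real Finset
open scoped NNReal

namespace ProbabilityTheory.HasLaw

variable {Ω : Type*} [MeasurableSpace Ω] {μ : Measure Ω} {X : Ω → ℝ} {v : ℝ≥0}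

lemma integrable_sq_of_gaussianReal (hX : HasLaw X (gaussianReal 0 v) μ) :
    Integrable (fun ω ↦ X ω ^ 2) μ := by
  have h := (memLp_id_gaussianReal (μ := 0) (v := v) 2).integrable_sq
  rw [← hX.map_eq] at h
  exact (integrable_map_measure (by fun_prop) hX.aemeasurable).1 h

lemma integral_sq_of_gaussianReal (hX : HasLaw X (gaussianReal 0 v) μ) :
    ∫ ω, X ω ^ 2 ∂μ = v := by
  have hmean : μ[X] = 0 := by rw [hX.integral_eq, integral_id_gaussianReal]
  rw [← variance_of_integral_eq_zero hX.aemeasurable hmean, hX.variance_eq,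
    variance_id_gaussianReal]

end ProbabilityTheory.HasLaw

lemma integral_tsum_sq_div_of_gaussianReal {Ω : Type*} [MeasurableSpace Ω] {μ : Measure Ω}
    {Z : ℕ → Ω → ℝ} (hZ : ∀ i, HasLaw (Z i) (gaussianReal 0 1) μ) {d : ℕ → ℝ}
    (hd : Summable fun i ↦ (d i)⁻¹) :
    ∫ ω, ∑' i, Z i ω ^ 2 / d i ∂μ = ∑' i, (d i)⁻¹ := by
  have hint i : Integrable (fun ω ↦ Z i ω ^ 2 / d i) μ :=
    (hZ i).integrable_sq_of_gaussianReal.div_const _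
  rw [← integral_tsum_of_summable_integral_norm hint]
  · simp_rw [integral_div, (hZ _).integral_sq_of_gaussianReal]
    simp
  · simp_rw [norm_div, Real.norm_of_nonneg (sq_nonneg _), integral_div,
      (hZ _).integral_sq_of_gaussianReal]
    simpa using hd.abs

lemma Finset.mul_le_two_mul_sum_range_of_le_add_reflect {f : ℕ → ℝ} {m : ℕ} {b : ℝ}
    (h : ∀ i < m, b ≤ f i + f (m - 1 - i)) : m * b ≤ 2 * ∑ i ∈ range m, f i := by
  have hsum : ∑ _i ∈ range m, b ≤ ∑ i ∈ range m, (f i + f (m - 1 - i)) :=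
    sum_le_sum fun i hi ↦ h i (mem_range.1 hi)
  rw [sum_add_distrib, sum_range_reflect f m, sum_const, card_range, nsmul_eq_mul] at hsum
  linarith

lemma one_div_le_inv_add_inv_of_mul_le_sq {n p q : ℝ} (hn : 0 < n) (hp : 0 ≤ p) (hq : 0 ≤ q)
    (hpq : p * q ≤ n ^ 2) : 1 / n ≤ (p + n)⁻¹ + (q + n)⁻¹ := by
  rw [inv_add_inv (by positivity) (by positivity), div_le_div_iff₀ hn (by positivity)]
  nlinarith

noncomputable def expWeight (a n t : ℝ) : ℝ := (a * exp (t / a) + n)⁻¹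

section
variable {a n : ℝ}

lemma summable_expWeight_nat_succ (ha : 0 < a) (hn : 0 ≤ n) :
    Summable fun i : ℕ ↦ expWeight a n (i + 1) := by
  have hgeom : Summable fun i : ℕ ↦ (a * exp (1 / a))⁻¹ * exp (-1 / a) ^ i :=
    (summable_geometric_of_lt_one (exp_nonneg _)
      (exp_lt_one_iff.2 (div_neg_of_neg_of_pos (by norm_num) ha))).mul_left _
  refine hgeom.of_nonneg_of_le (fun i ↦ by unfold expWeight; positivity) fun i ↦ ?_
  calc expWeight a n (i + 1) ≤ (a * exp ((i + 1) / a))⁻¹ :=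
        inv_anti₀ (by positivity) (le_add_of_nonneg_right hn)
    _ = (a * exp (1 / a))⁻¹ * exp (-1 / a) ^ i := by
        rw [← exp_nat_mul, show (i + 1) / a = 1 / a + i / a by ring, exp_add,
          show (i : ℝ) * (-1 / a) = -(i / a) by ring, exp_neg, ← mul_assoc, mul_inv]

lemma one_div_le_expWeight_add_expWeight (ha : 0 < a) (hn : 0 < n) {s t : ℝ}
    (hst : s + t ≤ 2 * (a * log (n / a))) : 1 / n ≤ expWeight a n s + expWeight a n t := by
  refine one_div_le_inv_add_inv_of_mul_le_sq hn (by positivity) (by positivity) ?_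
  calc a * exp (s / a) * (a * exp (t / a)) = a ^ 2 * exp ((s + t) / a) := by
        rw [add_div, exp_add]; ring
    _ ≤ a ^ 2 * exp (2 * log (n / a)) := by
        gcongr
        rw [div_le_iff₀ ha]
        linarith
    _ = n ^ 2 := by
        rw [two_mul, exp_add, exp_log (by positivity)]
        field_simp

lemma div_le_sum_range_expWeight (ha : 0 < a) (hn : 0 < n) {x : ℝ} (hx : 3 / 2 ≤ x)
    (hxL : x ≤ a * log (n / a)) :
    x / (2 * n) ≤ ∑ i ∈ range (⌊2 * x⌋₊ - 1), expWeight a n (i + 1) := by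
  set m := ⌊2 * x⌋₊ - 1
  have h3 : 3 ≤ ⌊2 * x⌋₊ := Nat.le_floor (by push_cast; linarith)
  have hfloor : (⌊2 * x⌋₊ : ℝ) = m + 1 := by
    rw [← Nat.cast_add_one, Nat.sub_add_cancel (by omega)]
  have hmx : (m : ℝ) + 1 ≤ 2 * x := hfloor ▸ Nat.floor_le (by linarith)
  have hxm : x ≤ m := by
    have h2x := hfloor ▸ Nat.lt_floor_add_one (2 * x)
    have h3' : (3 : ℝ) ≤ m + 1 := hfloor ▸ (by exact_mod_cast h3)
    linarith
  have hpair := Finset.mul_le_two_mul_sum_range_of_le_add_reflect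
    (f := fun i ↦ expWeight a n (i + 1)) (m := m) (b := 1 / n) fun i hi ↦ by
      refine one_div_le_expWeight_add_expWeight ha hn ?_
      have : ((i + (m - 1 - i) + 1 : ℕ) : ℝ) + 1 ≤ 2 * x := by
        rwa [show i + (m - 1 - i) + 1 = m by omega]
      push_cast at this
      linarith
  calc x / (2 * n) ≤ m / (2 * n) := by gcongr
    _ = m * (1 / n) / 2 := by ring
    _ ≤ _ := by linarith

lemma three_div_four_le_expWeight_one_add_expWeight_two (ha : 1 ≤ a) (hn : 0 < n)
    (hL : 1 ≤ a * log (n / a)) : 3 / (4 * n) ≤ expWeight a n 1 + expWeight a n 2 := by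
  have ha0 : 0 < a := by linarith
  have hexp : a * exp (1 / a) ≤ n := by
    have : 1 / a ≤ log (n / a) := by rw [div_le_iff₀ ha0]; linarith
    calc a * exp (1 / a) ≤ a * exp (log (n / a)) := by gcongr
      _ = n := by rw [exp_log (by positivity)]; field_simp
  have h1 : 1 / (2 * n) ≤ expWeight a n 1 := by
    have := one_div_le_expWeight_add_expWeight ha0 hn (s := 1) (t := 1) (by linarith)
    rw [show 1 / (2 * n) = 1 / n / 2 by ring]
    linarith
  have h2 : 1 / (4 * n) ≤ expWeight a n 2 := by
    rw [expWeight, one_div]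
    refine inv_anti₀ (by positivity) ?_
    have he : exp (1 / a) ≤ 3 := by
      calc exp (1 / a) ≤ exp 1 := exp_le_exp.2 (by rw [div_le_one ha0]; exact ha)
        _ ≤ 3 := by linarith [exp_one_lt_d9]
    calc a * exp (2 / a) + n = a * exp (1 / a) * exp (1 / a) + n := by
          rw [mul_assoc, ← exp_add]; ring_nf
      _ ≤ n * 3 + n := by gcongr
      _ = 4 * n := by ring
  calc 3 / (4 * n) = 1 / (2 * n) + 1 / (4 * n) := by field_simp; norm_num
    _ ≤ _ := add_le_add h1 h2

lemma div_mul_log_le_tsum_expWeight (ha : 1 ≤ a) (han : a * exp 1 ≤ n) :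
    a / (2 * n) * log (n / a) ≤ ∑' i : ℕ, expWeight a n (i + 1) := by
  have ha0 : 0 < a := by linarith
  have hn : 0 < n := lt_of_lt_of_le (by positivity) han
  have hL : 1 ≤ a * log (n / a) := by
    have : 1 ≤ log (n / a) := by
      rw [le_log_iff_exp_le (by positivity), le_div_iff₀ ha0]; linarith
    nlinarith
  have hsum := summable_expWeight_nat_succ ha0 hn.le
  have hnonneg (i : ℕ) : 0 ≤ expWeight a n (i + 1) := by unfold expWeight; positivity
  rw [show a / (2 * n) * log (n / a) = a * log (n / a) / (2 * n) by ring]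
  rcases le_or_gt (3 / 2) (a * log (n / a)) with hbig | hsmall
  · exact (div_le_sum_range_expWeight ha0 hn hbig le_rfl).trans
      (hsum.sum_le_tsum _ fun i _ ↦ hnonneg i)
  · calc a * log (n / a) / (2 * n) ≤ 3 / (4 * n) := by
          rw [div_le_div_iff₀ (by positivity) (by positivity)]; nlinarith
      _ ≤ expWeight a n 1 + expWeight a n 2 :=
          three_div_four_le_expWeight_one_add_expWeight_two ha hn hL
      _ ≤ ∑' i : ℕ, expWeight a n (i + 1) := by
          simpa [sum_range_succ, one_add_one_eq_two] using
            hsum.sum_le_tsum (range 2) fun i _ ↦ hnonneg i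
end

theorem stmt9_general {Ω : Type*} [MeasurableSpace Ω] (μ : Measure Ω)
    (Z : ℕ → Ω → ℝ) (hmeas : ∀ i, Measurable (Z i))
    (hgauss : ∀ i, Measure.map (Z i) μ = gaussianReal 0 1)
    (n a : ℝ) (ha : 1 ≤ a) (han : a ≤ n / Real.exp 1) :
    (a / (2 * n)) * Real.log (n / a) ≤
      ∫ ω, (∑' i : ℕ, (Z i ω) ^ 2 / (a * Real.exp (((i : ℝ) + 1) / a) + n)) ∂μ := by
  have hZ i : HasLaw (Z i) (gaussianReal 0 1) μ := ⟨(hmeas i).aemeasurable, hgauss i⟩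
  have han' : a * exp 1 ≤ n := by rwa [le_div_iff₀ (exp_pos 1)] at han
  have hn : 0 ≤ n := le_trans (by positivity) han'
  rw [integral_tsum_sq_div_of_gaussianReal hZ (summable_expWeight_nat_succ (by linarith) hn)]
  exact div_mul_log_le_tsum_expWeight ha han'

/-- For `Z_i` i.i.d. standard normal and `U_n(a) = Σ_{i≥1} Z_i²/(a e^{i/a}+n)`:
`E[U_n(a)] ≥ (a/(2n))·log(n/a)` whenever `1 ≤ a ≤ n/e`. -/
theorem stmt9 {Ω : Type*} [MeasurableSpace Ω] (μ : Measure Ω) [IsProbabilityMeasure μ]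
    (Z : ℕ → Ω → ℝ) (hmeas : ∀ i, Measurable (Z i))
    (hindep : iIndepFun Z μ)
    (hgauss : ∀ i, Measure.map (Z i) μ = gaussianReal 0 1)
    (n a : ℝ) (ha : 1 ≤ a) (han : a ≤ n / Real.exp 1) :
    (a / (2 * n)) * Real.log (n / a) ≤
      ∫ ω, (∑' i : ℕ, (Z i ω) ^ 2 / (a * Real.exp (((i : ℝ) + 1) / a) + n)) ∂μ :=
  stmt9_general μ Z hmeas hgauss n a ha han
end
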